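/- A nonempty finite word w over a totally ordered alphabet is a Lyndon word if and only if for every nonempty proper suffix v of w, one has w^ω < v^ω in the lexicographic order on infinite words. -/

import Mathlib

variable {A : Type*} [LinearOrder A] [Inhabited A]

def omegaPow (u : List A) : ℕ → A := fun n => u.getD (n % u.length) default
def lexLt (s t : ℕ → A) : Prop := ∃ k, (∀ i < k, s i = t i) ∧ s k < t k
def cat (p : List A) (s : ℕ → A) : ℕ → A :=
  fun n => if n < p.length then p.getD n default else s (n - p.length)

lemma omegaPow_eq_getD {u : List A} {n : ℕ} (h : n < u.length) :
    omegaPow u n = u.getD n default := by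
  simp [omegaPow, Nat.mod_eq_of_lt h]

lemma lexLt_cat_iff {p : List A} {s t : ℕ → A} :
    lexLt (cat p s) (cat p t) ↔ lexLt s t := by
  constructor
  · rintro ⟨k, hk, hlt⟩
    have hkp : ¬ k < p.length := by
      intro h
      simp only [cat, if_pos h] at hlt
      exact lt_irrefl _ hlt
    refine ⟨k - p.length, fun i hi => ?_, ?_⟩
    · have := hk (i + p.length) (by omega)
      simpa [cat, Nat.add_sub_cancel] using this
    · simp only [cat, if_neg hkp] at hlt
      exact hlt
  · rintro ⟨k, hk, hlt⟩
    refine ⟨k + p.length, fun i hi => ?_, ?_⟩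
    · by_cases h : i < p.length
      · simp [cat, h]
      · simp only [cat, if_neg h]
        exact hk _ (by omega)
    · simp only [cat, if_neg (by omega : ¬ k + p.length < p.length),
        Nat.add_sub_cancel]
      exact hlt

lemma omegaPow_period (v : List A) (i : ℕ) :
    omegaPow v (i + v.length) = omegaPow v i := by
  simp [omegaPow, Nat.add_mod_right]

lemma lexLt_cat_self {v : List A} (hv : v ≠ []) :
    ∀ k (t : ℕ → A), (∀ i < k, t i = omegaPow v i) → t k < omegaPow v k →
      lexLt t (cat v t) := by
  intro k
  induction k using Nat.strong_induction_on with
  | _ k IH =>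
    intro t hag hlt
    have hvpos : 0 < v.length := List.length_pos_iff.mpr hv
    by_cases hk : k < v.length
    · refine ⟨k, fun i hi => ?_, ?_⟩
      · rw [hag i hi]
        simp only [cat, if_pos (by omega : i < v.length)]
        exact omegaPow_eq_getD (by omega)
      · simp only [cat, if_pos hk]
        rwa [← omegaPow_eq_getD hk]
    · set t' : ℕ → A := fun i => t (i + v.length) with ht'
      have hteq : t = cat v t' := by
        funext i
        by_cases h : i < v.length
        · simp only [cat, if_pos h]
          rw [hag i (by omega), omegaPow_eq_getD h]
        · simp only [cat, if_neg h, ht']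
          congr 1
          omega
      have hag' : ∀ i < k - v.length, t' i = omegaPow v i := by
        intro i hi
        rw [ht']
        simp only
        rw [hag (i + v.length) (by omega), omegaPow_period]
      have hlt' : t' (k - v.length) < omegaPow v (k - v.length) := by
        have hkk : k - v.length + v.length = k := by omega
        rw [ht']
        simp only
        rw [hkk, ← omegaPow_period v (k - v.length), hkk]
        exact hlt
      have hmain := IH (k - v.length) (by omega) t' hag' hlt'
      rw [hteq]
      exact lexLt_cat_iff.mpr hmain

lemma lex_exists {x y : List A} (h : List.Lex (· < ·) x y) :
    x <+: y ∨ ∃ j, j < x.length ∧ j < y.length ∧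
      (∀ i < j, x.getD i default = y.getD i default) ∧
      x.getD j default < y.getD j default := by
  induction h with
  | nil => exact Or.inl List.nil_prefix
  | @rel a l b l' hab =>
    exact Or.inr ⟨0, by simp, by simp, fun i hi => by omega, by simpa⟩
  | @cons a l l' h ih =>
    rcases ih with hp | ⟨j, h1, h2, hag, hlt⟩
    · obtain ⟨t, rfl⟩ := hp
      exact Or.inl ⟨t, rfl⟩
    · refine Or.inr ⟨j + 1, by simpa using h1, by simpa using h2, ?_, by simpa using hlt⟩
      intro i hi
      cases i with
      | zero => simp
      | succ i => simpa using hag i (by omega)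

lemma omegaPow_rot (a b : List A) (j : ℕ) :
    omegaPow (a ++ b) (a.length + j) = omegaPow (b ++ a) j := by
  rcases Nat.eq_zero_or_pos (a.length + b.length) with hN | hN
  · have ha : a = [] := List.length_eq_zero_iff.mp (by omega)
    have hb : b = [] := List.length_eq_zero_iff.mp (by omega)
    subst ha; subst hb; simp [omegaPow]
  · have hlen1 : (a ++ b).length = a.length + b.length := by simp
    have hlen2 : (b ++ a).length = a.length + b.length := by simp; omega
    unfold omegaPow
    rw [hlen1, hlen2]
    have hr : j % (a.length + b.length) < a.length + b.length := Nat.mod_lt _ hN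
    set N := a.length + b.length with hNdef
    set r := j % N with hrdef
    have h1 : (a.length + j) % N = (a.length + r) % N :=
      (Nat.add_mod_mod a.length j N).symm
    rw [h1]
    by_cases hb : r < b.length
    · have h2 : (a.length + r) % N = a.length + r := Nat.mod_eq_of_lt (by omega)
      rw [h2, List.getD_append_right a b _ _ (by omega),
        List.getD_append b a _ r hb, Nat.add_sub_cancel_left]
    · have h2 : (a.length + r) % N = r - b.length := by
        rw [Nat.mod_eq_sub_mod (by omega)]
        rw [Nat.mod_eq_of_lt (by omega)]
        omega
      rw [h2, List.getD_append a b _ _ (by omega),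
        List.getD_append_right b a _ _ (by omega)]

lemma cat_omegaPow (a b : List A) :
    cat a (omegaPow (b ++ a)) = omegaPow (a ++ b) := by
  funext n
  by_cases h : n < a.length
  · have h' : n < (a ++ b).length := by simp; omega
    simp only [cat, if_pos h, omegaPow, Nat.mod_eq_of_lt h',
      List.getD_append a b _ _ h]
  · simp only [cat, if_neg h]
    have := omegaPow_rot a b (n - a.length)
    rw [Nat.add_sub_cancel' (le_of_not_gt h)] at this
    exact this.symm

def IsLyndon (w : List A) : Prop :=
  w ≠ [] ∧ ∀ v, v <:+ w → v ≠ [] → v ≠ w → List.Lex (· < ·) w v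

lemma lexLt_asymm {s t : ℕ → A} (h1 : lexLt s t) (h2 : lexLt t s) : False := by
  obtain ⟨k, hk, hlt⟩ := h1
  obtain ⟨k', hk', hlt'⟩ := h2
  rcases lt_trichotomy k k' with h | rfl | h
  · exact absurd (hk' k h).symm (ne_of_lt hlt)
  · exact absurd (hlt.trans hlt') (lt_irrefl _)
  · exact absurd (hk k' h) (ne_of_gt hlt')

theorem isLyndon_iff_omegaPow_lt_suffixes (w : List A) (hw : w ≠ []) :
    IsLyndon w ↔
      ∀ v : List A, v <:+ w → v ≠ [] → v ≠ w →
        lexLt (omegaPow w) (omegaPow v) := by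
  constructor
  · intro hL v hsuf hne hnev
    have hlen : v.length < w.length :=
      lt_of_le_of_ne hsuf.length_le (fun h => hnev (hsuf.eq_of_length h))
    have hlex := hL.2 v hsuf hne hnev
    rcases lex_exists hlex with hp | ⟨j, h1, h2, hag, hlt⟩
    · exact absurd hp.length_le (by omega)
    · refine ⟨j, fun i hi => ?_, ?_⟩
      · rw [omegaPow_eq_getD (by omega), omegaPow_eq_getD (by omega)]
        exact hag i hi
      · rw [omegaPow_eq_getD h1, omegaPow_eq_getD h2]
        exact hlt
  · intro H
    refine ⟨hw, fun v hsuf hne hnev => ?_⟩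
    rcases trichotomous_of (List.Lex (α := A) (· < ·)) w v with h | h | h
    · exact h
    · exact absurd h.symm hnev
    · -- Lex v w : either v is a prefix of w, or v has a smaller letter first
      have hlexlt := H v hsuf hne hnev
      rcases lex_exists h with hp | ⟨j, h1, h2, hag, hlt⟩
      · -- border case : v is a prefix and a suffix
        exfalso
        obtain ⟨u, rfl⟩ := hp
        have hu0 : u ≠ [] := by rintro rfl; simp at hnev
        have husuf : u <:+ v ++ u := List.suffix_append v u
        have hvpos : 0 < v.length := List.length_pos_iff.mpr hne
        have hunev : u ≠ v ++ u := by
          intro hcontr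
          have := congrArg List.length hcontr
          rw [List.length_append] at this
          omega
        have h2' := H u husuf hu0 hunev
        -- h2' : lexLt (omegaPow (v ++ u)) (omegaPow u)
        have hB : lexLt (omegaPow (v ++ u)) (omegaPow (u ++ v)) := by
          obtain ⟨k, hag', hlt'⟩ := h2'
          have := lexLt_cat_self hu0 k (omegaPow (v ++ u)) hag' hlt'
          rwa [cat_omegaPow u v] at this
        have e2 : omegaPow v = cat v (omegaPow v) := by
          have := cat_omegaPow v ([] : List A)
          simpa using this.symm
        have hA : lexLt (omegaPow (u ++ v)) (omegaPow (v ++ u)) := by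
          rw [← cat_omegaPow v u, e2] at hlexlt
          have h1' := lexLt_cat_iff.mp hlexlt
          obtain ⟨k, hag', hlt'⟩ := h1'
          have := lexLt_cat_self hne k (omegaPow (u ++ v)) hag' hlt'
          rwa [cat_omegaPow v u] at this
        exact lexLt_asymm hA hB
      · -- letter case : contradiction with hlexlt
        exfalso
        obtain ⟨k, hk, hklt⟩ := hlexlt
        rcases lt_trichotomy k j with hkj | rfl | hkj
        · have := hag k hkj
          rw [omegaPow_eq_getD (show k < w.length by omega),
            omegaPow_eq_getD (show k < v.length by omega)] at hklt
          exact absurd this.symm (ne_of_lt hklt)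
        · rw [omegaPow_eq_getD h2, omegaPow_eq_getD h1] at hklt
          exact absurd (hklt.trans hlt) (lt_irrefl _)
        · have := hk j hkj
          rw [omegaPow_eq_getD h2, omegaPow_eq_getD h1] at this
          exact absurd this (ne_of_gt hlt)
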